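/- Define a map Φ from perfect matchings of {1,...,2n} to cosets S_{2n}/α(S_n): Φ(M) is the relevant coset determined by M (the coset of any σ with σ(i) > σ(i+n) for all i and {{σ(i),σ(i+n)}} = M). Define a partial action of adjacent transpositions s on relevant cosets by s * x = s·x if s·x is relevant, and s * x = x otherwise. Then for every adjacent transposition s and every matching M, Φ(s·M) = s * Φ(M). -/

import Mathlib

open Equiv

/-- A perfect matching of `Fin (2*n)`. -/
def IsPerfectMatching (n : ℕ) (M : Finset (Finset (Fin (2 * n)))) : Prop :=
  (∀ p ∈ M, p.card = 2) ∧ ∀ x : Fin (2 * n), ∃! p, p ∈ M ∧ x ∈ p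

/-- The identification of `Fin n ⊕ Fin n` with `Fin (2*n)`, sending `inl i` to `i`
(the block `{1,...,n}`) and `inr i` to `n + i` (the block `{n+1,...,2n}`). -/
def blockEquiv (n : ℕ) : Fin n ⊕ Fin n ≃ Fin (2 * n) :=
  finSumFinEquiv.trans (finCongr (two_mul n).symm)

/-- Conjugation of permutation groups by an equivalence, as a `MulEquiv`. -/
def permCongrMulEquiv {α β : Type*} (e : α ≃ β) : Perm α ≃* Perm β :=
  { Equiv.permCongr e with
    map_mul' := by
      intro f g
      ext x
      simp [Equiv.permCongr, Equiv.equivCongr, Equiv.Perm.mul_apply] }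

/-- The block-diagonal embedding `α : S_n → S_{2n}`, acting by `τ` on each of the two
blocks: `α(τ)(x) = τ(x)` for `x ≤ n` and `α(τ)(x) = τ(x-n)+n` otherwise. -/
def alphaHom (n : ℕ) : Perm (Fin n) →* Perm (Fin (2 * n)) :=
  (permCongrMulEquiv (blockEquiv n)).toMonoidHom.comp
    ((Equiv.Perm.sumCongrHom (Fin n) (Fin n)).comp
      ((MonoidHom.id (Perm (Fin n))).prod (MonoidHom.id (Perm (Fin n)))))

/-- The image subgroup `α(S_n) ≤ S_{2n}`; the quotient `S_{2n} ⧸ K n` identifies `σ`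
with `σ ∘ α(τ)`, i.e. it is the set of cosets under right multiplication by `α(S_n)`. -/
def K (n : ℕ) : Subgroup (Perm (Fin (2 * n))) := (alphaHom n).range

/-- `σ` satisfies `σ(i) > σ(i+n)` for all `1 ≤ i ≤ n`. -/
def IsRelevantRep (n : ℕ) (σ : Perm (Fin (2 * n))) : Prop :=
  ∀ i : Fin n, σ (blockEquiv n (Sum.inr i)) < σ (blockEquiv n (Sum.inl i))

/-- A coset is relevant if it has a representative `σ` with `σ(i) > σ(i+n)` for all `i`. -/
def RelevantCoset (n : ℕ) (x : Perm (Fin (2 * n)) ⧸ K n) : Prop :=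
  ∃ σ : Perm (Fin (2 * n)), IsRelevantRep n σ ∧ QuotientGroup.mk σ = x

/-- The matching `{{σ(i), σ(i+n)} : 1 ≤ i ≤ n}` attached to `σ`. -/
def matchOf (n : ℕ) (σ : Perm (Fin (2 * n))) : Finset (Finset (Fin (2 * n))) :=
  Finset.univ.image fun i : Fin n =>
    ({σ (blockEquiv n (Sum.inl i)), σ (blockEquiv n (Sum.inr i))} : Finset (Fin (2 * n)))


/-- The elementwise action of `w ∈ S_{2n}` on a set of pairs. -/
def actOn (n : ℕ) (w : Perm (Fin (2 * n))) (M : Finset (Finset (Fin (2 * n)))) :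
    Finset (Finset (Fin (2 * n))) :=
  M.image (Finset.image w)

/-- The adjacent transposition `(j, j+1)` of `S_{2n}` (0-indexed). -/
def tr (n j : ℕ) (h : j + 1 < 2 * n) : Perm (Fin (2 * n)) :=
  Equiv.swap ⟨j, by omega⟩ ⟨j + 1, h⟩

/-!
Every perfect matching `M` is `matchOf n σ` for a relevant `σ` (list each pair larger element
first), and `matchOf` is constant on cosets, so `Φ(M)` is the coset of any relevant `σ` matching
`M`. Let `s = (j, j+1)`. If `s·Φ(M) = [sσ]` has a relevant representative, that representative
matches `s·M`, whence `Φ(s·M) = s·Φ(M)`. Otherwise `{j, j+1} ∈ M`: for if not, `s` swaps two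
consecutive values lying in different pairs, which preserves every comparison
`σ(i+n) < σ(i)`, so `sσ` itself would be relevant. And a swap of a pair of `M` fixes `M`.
-/

theorem swap_lt_swap_of_covBy {α : Type*} [LinearOrder α] [DecidableEq α] {a b x y : α}
    (hab : a ⋖ b) (hyx : y < x) (hne : ¬(y = a ∧ x = b)) : swap a b y < swap a b x := by
  have hlt := hab.lt
  have hle_a : ∀ {c}, c < b → c ≤ a := hab.le_of_lt
  have hge_b : ∀ {c}, a < c → b ≤ c := hab.ge_of_gt
  grind

theorem Finset.exists_lt_eq_pair_of_card_eq_two {α : Type*} [LinearOrder α] {p : Finset α}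
    (h : p.card = 2) : ∃ a b, b < a ∧ p = {a, b} := by
  obtain ⟨x, y, hxy, rfl⟩ := Finset.card_eq_two.1 h
  rcases hxy.lt_or_gt with hlt | hlt
  · exact ⟨y, x, hlt, Finset.pair_comm x y⟩
  · exact ⟨x, y, hlt, rfl⟩

theorem Fin.mk_covBy_mk_add_one {m j : ℕ} (hj : j + 1 < m) :
    (⟨j, by omega⟩ : Fin m) ⋖ ⟨j + 1, hj⟩ :=
  ⟨Fin.mk_lt_mk.2 j.lt_succ_self, fun c h₁ h₂ => by simp only [Fin.lt_def] at h₁ h₂; omega⟩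

namespace IsPerfectMatching

variable {n : ℕ} {M : Finset (Finset (Fin (2 * n)))}

theorem eq_of_mem (hM : IsPerfectMatching n M) {p q : Finset (Fin (2 * n))} {x : Fin (2 * n)}
    (hp : p ∈ M) (hq : q ∈ M) (hxp : x ∈ p) (hxq : x ∈ q) : p = q :=
  (hM.2 x).unique ⟨hp, hxp⟩ ⟨hq, hxq⟩

theorem card_eq (hM : IsPerfectMatching n M) : M.card = n := by
  have hcover : M.biUnion id = Finset.univ := Finset.eq_univ_of_forall fun x => by
    obtain ⟨p, ⟨hp, hxp⟩, -⟩ := hM.2 x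
    exact Finset.mem_biUnion.2 ⟨p, hp, hxp⟩
  have hsum := Finset.card_biUnion (s := M) (t := id) fun p hp q hq hpq =>
    Finset.disjoint_left.2 fun _ hxp hxq => hpq (hM.eq_of_mem hp hq hxp hxq)
  rw [hcover, Finset.card_univ, Fintype.card_fin] at hsum
  simp only [id, Finset.sum_congr rfl hM.1, Finset.sum_const, smul_eq_mul] at hsum
  omega

theorem actOn_swap_eq_self (hM : IsPerfectMatching n M) {a b : Fin (2 * n)}
    (hab : {a, b} ∈ M) : actOn n (swap a b) M = M := by
  have hfix : ∀ p ∈ M, p.image (swap a b) = p := by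
    intro p hp
    by_cases hp_ab : p = {a, b}
    · simp [hp_ab, Finset.image_insert, Finset.pair_comm]
    · have ha : a ∉ p := fun h => hp_ab (hM.eq_of_mem hp hab h (by simp))
      have hb : b ∉ p := fun h => hp_ab (hM.eq_of_mem hp hab h (by simp))
      conv_rhs => rw [← Finset.image_id (s := p)]
      exact Finset.image_congr fun x hx =>
        swap_apply_of_ne_of_ne (fun h => ha (h ▸ hx)) (fun h => hb (h ▸ hx))
  conv_rhs => rw [← Finset.image_id (s := M)]
  exact Finset.image_congr hfix

end IsPerfectMatching

section matchOf

variable {n : ℕ}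

theorem alphaHom_apply_blockEquiv (τ : Perm (Fin n)) (z : Fin n ⊕ Fin n) :
    alphaHom n τ (blockEquiv n z) = blockEquiv n (sumCongr τ τ z) := by
  simp [alphaHom, permCongrMulEquiv, Perm.sumCongrHom]

theorem matchOf_mul (w σ : Perm (Fin (2 * n))) :
    matchOf n (w * σ) = actOn n w (matchOf n σ) := by
  simp only [matchOf, actOn, Finset.image_image]
  exact Finset.image_congr fun i _ => by simp [Perm.mul_apply]

theorem matchOf_mul_alphaHom (σ : Perm (Fin (2 * n))) (τ : Perm (Fin n)) :
    matchOf n (σ * alphaHom n τ) = matchOf n σ := by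
  have hcomp : matchOf n (σ * alphaHom n τ) = Finset.univ.image
      ((fun i : Fin n => ({σ (blockEquiv n (Sum.inl i)), σ (blockEquiv n (Sum.inr i))} :
        Finset (Fin (2 * n)))) ∘ τ) :=
    Finset.image_congr fun i _ => by simp [Perm.mul_apply, alphaHom_apply_blockEquiv]
  rw [hcomp, ← Finset.image_image, Finset.image_univ_of_surjective τ.surjective]
  rfl

theorem matchOf_eq_of_mk_eq {σ τ : Perm (Fin (2 * n))}
    (h : (QuotientGroup.mk σ : Perm (Fin (2 * n)) ⧸ K n) = QuotientGroup.mk τ) :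
    matchOf n σ = matchOf n τ := by
  obtain ⟨u, hu⟩ := QuotientGroup.eq.1 h
  rw [show τ = σ * alphaHom n u by rw [hu, mul_inv_cancel_left], matchOf_mul_alphaHom]

theorem exists_isRelevantRep_matchOf_eq {M : Finset (Finset (Fin (2 * n)))}
    (hM : IsPerfectMatching n M) : ∃ σ, IsRelevantRep n σ ∧ matchOf n σ = M := by
  let e : Fin n ≃ M := (M.equivFin.trans (finCongr hM.card_eq)).symm
  choose hi lo hlt hpair using fun i => Finset.exists_lt_eq_pair_of_card_eq_two (hM.1 _ (e i).2)
  let f : Fin n ⊕ Fin n → Fin (2 * n) := Sum.elim hi lo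
  have hf_mem : ∀ z, f z ∈ (e (z.elim id id) : Finset (Fin (2 * n))) := by
    rintro (i | i) <;> simp [f, hpair i]
  have hf_inj : Function.Injective f := by
    intro z z' h
    have hidx : z.elim id id = z'.elim id id :=
      e.injective (Subtype.ext (hM.eq_of_mem (e _).2 (e _).2 (hf_mem z) (h ▸ hf_mem z')))
    rcases z with i | i <;> rcases z' with i' | i' <;> simp only [Sum.elim_inl, Sum.elim_inr,
      id] at hidx <;> subst hidx <;> simp_all [f, (hlt i).ne, (hlt i).ne']
  have hf_bij : Function.Bijective f :=
    (Fintype.bijective_iff_injective_and_card f).2 ⟨hf_inj, by simp [two_mul]⟩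
  refine ⟨(blockEquiv n).symm.trans (Equiv.ofBijective f hf_bij), fun i => by simpa [f] using hlt i, ?_⟩
  ext q
  simp only [matchOf, Equiv.trans_apply, Equiv.symm_apply_apply, Equiv.ofBijective_apply,
    Finset.mem_image, Finset.mem_univ, true_and]
  refine ⟨?_, fun hq => ⟨e.symm ⟨q, hq⟩, by simp [f, ← hpair]⟩⟩
  rintro ⟨i, rfl⟩
  simp [f, ← hpair]

theorem IsRelevantRep.swap_mul {σ : Perm (Fin (2 * n))} (hσ : IsRelevantRep n σ)
    {a b : Fin (2 * n)} (hab : a ⋖ b) (hnotin : {a, b} ∉ matchOf n σ) :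
    IsRelevantRep n (swap a b * σ) := fun i =>
  swap_lt_swap_of_covBy hab (hσ i) fun ⟨hb, ha⟩ => hnotin <| Finset.mem_image.2
    ⟨i, Finset.mem_univ i, by rw [ha, hb, Finset.pair_comm]⟩

end matchOf

theorem Phi_apply_eq_of_matchOf_eq {n : ℕ}
    {Φ : {M : Finset (Finset (Fin (2 * n))) // IsPerfectMatching n M} → Perm (Fin (2 * n)) ⧸ K n}
    (hΦ : ∀ (σ : Perm (Fin (2 * n))) (_ : IsRelevantRep n σ)
      (hpm : IsPerfectMatching n (matchOf n σ)), Φ ⟨matchOf n σ, hpm⟩ = QuotientGroup.mk σ)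
    {σ : Perm (Fin (2 * n))} (hσ : IsRelevantRep n σ) {M : Finset (Finset (Fin (2 * n)))}
    (hM : IsPerfectMatching n M) (h : matchOf n σ = M) : Φ ⟨M, hM⟩ = QuotientGroup.mk σ := by
  subst h
  exact hΦ σ hσ hM

/-- Let `Φ` send a perfect matching `M` to the relevant coset determined by `M` (the coset
of any `σ` with `σ(i) > σ(i+n)` for all `i` and `{{σ(i),σ(i+n)}} = M`). For an adjacent
transposition `s` define a partial action on relevant cosets by `s * x = s·x` if `s·x` is
relevant and `s * x = x` otherwise. Then `Φ(s·M) = s * Φ(M)` for every adjacent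
transposition `s` and matching `M`. -/
theorem Phi_equivariant (n : ℕ)
    (Φ : {M : Finset (Finset (Fin (2 * n))) // IsPerfectMatching n M} →
      Perm (Fin (2 * n)) ⧸ K n)
    (hΦ : ∀ (σ : Perm (Fin (2 * n))) (hσ : IsRelevantRep n σ)
      (hpm : IsPerfectMatching n (matchOf n σ)),
      Φ ⟨matchOf n σ, hpm⟩ = QuotientGroup.mk σ) :
    ∀ (j : ℕ) (hj : j + 1 < 2 * n) (M : Finset (Finset (Fin (2 * n))))
      (hM : IsPerfectMatching n M)
      (hM' : IsPerfectMatching n (actOn n (tr n j hj) M)),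
      (RelevantCoset n (tr n j hj • Φ ⟨M, hM⟩) →
        Φ ⟨actOn n (tr n j hj) M, hM'⟩ = tr n j hj • Φ ⟨M, hM⟩) ∧
      (¬ RelevantCoset n (tr n j hj • Φ ⟨M, hM⟩) →
        Φ ⟨actOn n (tr n j hj) M, hM'⟩ = Φ ⟨M, hM⟩) := by
  intro j hj M hM hM'
  obtain ⟨σ, hσ, rfl⟩ := exists_isRelevantRep_matchOf_eq hM
  rw [hΦ σ hσ hM, MulAction.Quotient.smul_mk, smul_eq_mul]
  refine ⟨fun ⟨σ', hσ', hmk⟩ => ?_, fun hnot => ?_⟩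
  · rw [← hmk]
    exact Phi_apply_eq_of_matchOf_eq hΦ hσ' hM' (by rw [matchOf_eq_of_mk_eq hmk, matchOf_mul])
  · have hpair : {⟨j, by omega⟩, ⟨j + 1, hj⟩} ∈ matchOf n σ := by
      by_contra hnotin
      exact hnot ⟨_, hσ.swap_mul (Fin.mk_covBy_mk_add_one hj) hnotin, rfl⟩
    exact Phi_apply_eq_of_matchOf_eq hΦ hσ hM' (hM.actOn_swap_eq_self hpair).symm
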